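/- Let k be a field, G a finite group, and P a finite G-poset. There is a k-algebra isomorphism k(G∝P) ≅ kP[G] between the category algebra of the transporter category and the skew group algebra of G over the incidence algebra kP, given on basis elements by (g, gx ≤ y) ↦ (gx ≤ y) ⊗ g. -/

import Mathlib

/-!
A morphism `(g, gx ≤ y)` of `G ∝ P` is determined by the pair `(gx ≤ y, g)`, so the map is the
linear isomorphism induced by this bijection of bases. It is multiplicative because
`(h, hy ≤ z) ∘ (g, gx ≤ y) = (hg, hgx ≤ z)`, while in `kP[G]`
`((hy ≤ z) ⊗ h) ((gx ≤ y) ⊗ g) = (hy ≤ z) (hgx ≤ hy) ⊗ hg = (hgx ≤ z) ⊗ hg`. Reindexed along the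
bijection, a term of the convolution sum of `k(G∝P)` can only contribute when its group components
satisfy `g₂ = g₁⁻¹ g`, and summing out `g₂` leaves exactly the sum defining the skew product.
-/

open CategoryTheory

/-- The transporter category `G ∝ P` of a `G`-poset `P`, the action being given
by a homomorphism `φ : G →* (P ≃o P)`.  Objects are those of `P`. -/
def Transporter (G : Type*) [Group G] (P : Type*) [PartialOrder P]
    (φ : G →* (P ≃o P)) : Type _ := P

namespace Transporter

variable {G : Type*} [Group G] {P : Type*} [PartialOrder P] (φ : G →* (P ≃o P))

/-- A morphism `x ⟶ y` in `G ∝ P` is a pair `(g, gx ≤ y)`;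
composition is `(h, hy ≤ z) ∘ (g, gx ≤ y) = (hg, (hg)x ≤ z)`. -/
instance : Category (Transporter G P φ) where
  Hom x y := { g : G // φ g (x : P) ≤ (y : P) }
  id x := ⟨1, by simp; exact le_rfl⟩
  comp {x y z} f g := ⟨g.1 * f.1, by
    have h1 : φ g.1 (φ f.1 (x : P)) ≤ φ g.1 (y : P) := (φ g.1).monotone f.2
    have h2 : φ (g.1 * f.1) (x : P) = φ g.1 (φ f.1 (x : P)) := by
      rw [map_mul]; rfl
    exact h2 ▸ le_trans h1 g.2⟩
  id_comp f := Subtype.ext (mul_one _)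
  comp_id f := Subtype.ext (one_mul _)
  assoc f g h := Subtype.ext (mul_assoc _ _ _).symm

end Transporter

/-- The set of morphisms of `C`, the basis of the category algebra. -/
abbrev CatMor (C : Type*) [CategoryTheory.Category C] := Σ x y : C, x ⟶ y

/-- The underlying vector space of the category algebra `kC`: functions on `Mor C`. -/
def CatAlgebra (k : Type*) (C : Type*) [CategoryTheory.Category C] := CatMor C → k

section CatAlgebra

open CategoryTheory

variable (k : Type*) [Field k] (C : Type*) [Category C] [Fintype C] [DecidableEq C]
  [∀ x y : C, Fintype (x ⟶ y)] [∀ x y : C, DecidableEq (x ⟶ y)]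

instance : AddCommGroup (CatAlgebra k C) := Pi.addCommGroup
instance : Module k (CatAlgebra k C) := Pi.module _ _ _

variable {k C}

/-- The basis element of the category algebra corresponding to a morphism. -/
def catSingle (m : CatMor C) : CatAlgebra k C := Pi.single m 1

/-- The convolution product of the category algebra: on basis elements,
`α * β = α ∘ β` if composable and `0` otherwise. -/
def catMul (a b : CatAlgebra k C) : CatAlgebra k C := fun m =>
  ∑ p : CatMor C, ∑ q : CatMor C,
    if h : q.2.1 = p.1 then
      (if (⟨q.1, p.2.1, (q.2.2 ≫ eqToHom h) ≫ p.2.2⟩ : CatMor C) = m then a p * b q else 0)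
    else 0

/-- The identity element `1 = ∑_{x ∈ Ob C} 1_x` of the category algebra. -/
def catOne : CatAlgebra k C := ∑ x : C, catSingle ⟨x, x, 𝟙 x⟩

end CatAlgebra

open CategoryTheory

section Skew

variable {k : Type*} [Field k] {G : Type*} [Group G] [Fintype G] [DecidableEq G]
  {P : Type*} [PartialOrder P] [Fintype P] [DecidableEq P]
  [DecidableRel ((· ≤ ·) : P → P → Prop)] (φ : G →* (P ≃o P))

instance (x y : P) : Fintype (x ⟶ y) := show Fintype (ULift (PLift (x ≤ y))) from inferInstance

instance (x y : P) : DecidableEq (x ⟶ y) :=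
  show DecidableEq (ULift (PLift (x ≤ y))) from inferInstance

instance : Fintype (Transporter G P φ) := show Fintype P from inferInstance

instance : DecidableEq (Transporter G P φ) := show DecidableEq P from inferInstance

instance (x y : Transporter G P φ) : Fintype (x ⟶ y) :=
  show Fintype { g : G // φ g (x : P) ≤ (y : P) } from
    @Subtype.fintype _ _ (fun g => ‹DecidableRel ((· ≤ ·) : P → P → Prop)› _ _) _

instance (x y : Transporter G P φ) : DecidableEq (x ⟶ y) :=
  show DecidableEq { g : G // φ g (x : P) ≤ (y : P) } from inferInstance

/-- The action of `g ∈ G` on a basis element `(x ≤ y)` of the incidence algebra `kP`: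
`g · (x ≤ y) = (gx ≤ gy)`. -/
def gMor (g : G) (q : CatMor P) : CatMor P :=
  ⟨φ g q.1, φ g q.2.1, homOfLE ((φ g).monotone (leOfHom q.2.2))⟩

/-- The underlying vector space of the skew group algebra `kP[G] = kP ⊗_k kG`. -/
def SkewAlgebra (k : Type*) (P : Type*) [PartialOrder P] (G : Type*) : Type _ :=
  (CatMor P × G) → k

instance : AddCommGroup (SkewAlgebra k P G) := Pi.addCommGroup
instance : Module k (SkewAlgebra k P G) := Pi.module _ _ _

/-- The multiplication of the skew group algebra,
`(a₁ ⊗ g₁) * (a₂ ⊗ g₂) = a₁ (g₁ · a₂) ⊗ g₁g₂`. -/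
def skewMul (a b : SkewAlgebra k P G) : SkewAlgebra k P G := fun mg =>
  ∑ p : CatMor P, ∑ q : CatMor P, ∑ g₁ : G,
    if h : (gMor φ g₁ q).2.1 = p.1 then
      (if (⟨(gMor φ g₁ q).1, p.2.1, ((gMor φ g₁ q).2.2 ≫ eqToHom h) ≫ p.2.2⟩ : CatMor P) = mg.1
        then a (p, g₁) * b (q, g₁⁻¹ * mg.2) else 0)
    else 0

/-- The identity `∑_x (x ≤ x) ⊗ 1` of the skew group algebra. -/
def skewOne : SkewAlgebra k P G := ∑ x : P, Pi.single ((⟨x, x, 𝟙 x⟩ : CatMor P), (1 : G)) 1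

/-- The map `k(G∝P) → kP[G]`, `(g, gx ≤ y) ↦ (gx ≤ y) ⊗ g` on basis elements. -/
def transToSkew (a : CatAlgebra k (Transporter G P φ)) : SkewAlgebra k P G := fun mg =>
  a ⟨φ mg.2⁻¹ mg.1.1, mg.1.2.1, ⟨mg.2, by
    rw [map_inv, RelIso.apply_inv_self]
    exact leOfHom mg.1.2.2⟩⟩

end Skew

section IsComposite

variable {C : Type*} [Category C]

/-- `p.IsComposite q m` says that `m = p ∘ q`, i.e. `q` is followed by `p`. -/
def CatMor.IsComposite (p q m : CatMor C) : Prop :=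
  ∃ h : q.2.1 = p.1, (⟨q.1, p.2.1, (q.2.2 ≫ eqToHom h) ≫ p.2.2⟩ : CatMor C) = m

instance [DecidableEq C] [∀ x y : C, DecidableEq (x ⟶ y)] (p q m : CatMor C) :
    Decidable (p.IsComposite q m) := by
  unfold CatMor.IsComposite
  infer_instance

lemma CatMor.dite_comp_eq_ite_isComposite {M : Type*} [Zero M] [DecidableEq C]
    [∀ x y : C, DecidableEq (x ⟶ y)] (p q m : CatMor C) (x : M) :
    (if h : q.2.1 = p.1 then
      (if (⟨q.1, p.2.1, (q.2.2 ≫ eqToHom h) ≫ p.2.2⟩ : CatMor C) = m then x else 0) else 0) =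
      if p.IsComposite q m then x else 0 := by
  by_cases h : q.2.1 = p.1 <;> simp [CatMor.IsComposite, h]

lemma CatMor.ext_of_isThin [Quiver.IsThin C] {m m' : CatMor C} (h₁ : m.1 = m'.1)
    (h₂ : m.2.1 = m'.2.1) : m = m' := by
  obtain ⟨x, y, f⟩ := m
  obtain ⟨x', y', f'⟩ := m'
  dsimp only at h₁ h₂
  subst h₁ h₂
  rw [Subsingleton.elim f f']

lemma CatMor.isComposite_iff_of_isThin [Quiver.IsThin C] {p q m : CatMor C} :
    p.IsComposite q m ↔ q.2.1 = p.1 ∧ q.1 = m.1 ∧ p.2.1 = m.2.1 := by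
  constructor
  · rintro ⟨h, rfl⟩
    exact ⟨h, rfl, rfl⟩
  · rintro ⟨h, h₁, h₂⟩
    exact ⟨h, CatMor.ext_of_isThin h₁ h₂⟩

variable {k : Type*} [Field k] [Fintype C] [DecidableEq C] [∀ x y : C, Fintype (x ⟶ y)]
  [∀ x y : C, DecidableEq (x ⟶ y)]

lemma catMul_apply (a b : CatAlgebra k C) (m : CatMor C) :
    catMul a b m = ∑ p, ∑ q, if p.IsComposite q m then a p * b q else 0 := by
  simp only [catMul, CatMor.dite_comp_eq_ite_isComposite]

end IsComposite

section OrderIsoAction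

variable {G : Type*} [Group G] {α : Type*} [LE α] (φ : G →* (α ≃o α))

lemma MonoidHom.orderIso_map_mul_apply (g h : G) (x : α) : φ (g * h) x = φ g (φ h x) := by
  rw [map_mul]
  rfl

lemma MonoidHom.orderIso_map_inv_apply_apply (g : G) (x : α) : φ g⁻¹ (φ g x) = x := by
  rw [map_inv]
  exact RelIso.inv_apply_self _ x

lemma MonoidHom.orderIso_apply_map_inv_apply (g : G) (x : α) : φ g (φ g⁻¹ x) = x := by
  rw [map_inv]
  exact RelIso.apply_inv_self _ x

lemma MonoidHom.orderIso_eq_map_inv_apply_iff {g : G} {x y : α} : x = φ g⁻¹ y ↔ φ g x = y :=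
  ⟨fun h => by rw [h, orderIso_apply_map_inv_apply],
    fun h => by rw [← h, orderIso_map_inv_apply_apply]⟩

end OrderIsoAction

namespace Transporter

variable {G : Type*} [Group G] {P : Type*} [PartialOrder P] {φ : G →* (P ≃o P)}

@[simp]
lemma comp_val {x y z : Transporter G P φ} (f : x ⟶ y) (g : y ⟶ z) : (f ≫ g).1 = g.1 * f.1 :=
  rfl

@[simp]
lemma id_val (x : Transporter G P φ) : (𝟙 x : x ⟶ x).1 = 1 :=
  rfl

@[simp]
lemma eqToHom_val {x y : Transporter G P φ} (h : x = y) : (eqToHom h).1 = 1 := by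
  subst h
  rfl

lemma catMor_ext {m m' : CatMor (Transporter G P φ)} (h₁ : m.1 = m'.1) (h₂ : m.2.1 = m'.2.1)
    (h₃ : m.2.2.1 = m'.2.2.1) : m = m' := by
  obtain ⟨x, y, g⟩ := m
  obtain ⟨x', y', g'⟩ := m'
  dsimp only at h₁ h₂ h₃
  subst h₁ h₂
  rw [Subtype.ext h₃]

lemma isComposite_iff {p q m : CatMor (Transporter G P φ)} :
    p.IsComposite q m ↔ q.2.1 = p.1 ∧ q.1 = m.1 ∧ p.2.1 = m.2.1 ∧ p.2.2.1 * q.2.2.1 = m.2.2.1 := by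
  constructor
  · rintro ⟨h, rfl⟩
    simp [h]
  · rintro ⟨h, h₁, h₂, h₃⟩
    exact ⟨h, catMor_ext h₁ h₂ (by simpa using h₃)⟩

variable (φ) in
def morEquiv : CatMor (Transporter G P φ) ≃ CatMor P × G where
  toFun m := (⟨φ m.2.2.1 m.1, m.2.1, homOfLE m.2.2.2⟩, m.2.2.1)
  invFun mg := ⟨φ mg.2⁻¹ mg.1.1, mg.1.2.1, ⟨mg.2, by
    rw [map_inv, RelIso.apply_inv_self]
    exact leOfHom mg.1.2.2⟩⟩
  left_inv m := catMor_ext (φ.orderIso_map_inv_apply_apply _ _) rfl rfl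
  right_inv mg := Prod.ext (CatMor.ext_of_isThin (φ.orderIso_apply_map_inv_apply _ _) rfl) rfl

variable {k : Type*} (φ)

lemma morEquiv_id (x : Transporter G P φ) :
    morEquiv φ ⟨x, x, 𝟙 x⟩ = ((⟨x, x, 𝟙 (show P from x)⟩ : CatMor P), 1) :=
  Prod.ext (CatMor.ext_of_isThin (congrFun (congrArg DFunLike.coe (map_one φ)) x) rfl) rfl

def transToSkewEquiv [Field k] : CatAlgebra k (Transporter G P φ) ≃ₗ[k] SkewAlgebra k P G :=
  LinearEquiv.funCongrLeft k k (morEquiv φ).symm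

lemma coe_transToSkewEquiv [Field k] : ⇑(transToSkewEquiv (k := k) φ) = transToSkew φ :=
  rfl

lemma transToSkew_catSingle [Field k] [DecidableEq G] [DecidableEq P]
    (m : CatMor (Transporter G P φ)) :
    transToSkew φ (catSingle m) = (Pi.single (morEquiv φ m) (1 : k) : SkewAlgebra k P G) :=
  Pi.single_comp_equiv (morEquiv φ).symm m 1

lemma transToSkew_catOne [Field k] [DecidableEq G] [Fintype P] [DecidableEq P] :
    transToSkew φ (catOne : CatAlgebra k (Transporter G P φ)) = skewOne := by
  rw [← coe_transToSkewEquiv, catOne, map_sum]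
  simp only [coe_transToSkewEquiv, transToSkew_catSingle, morEquiv_id]
  rfl

lemma isComposite_morEquiv_symm_iff {p q : CatMor P} {g₁ g₂ : G} {mg : CatMor P × G} :
    ((morEquiv φ).symm (p, g₁)).IsComposite ((morEquiv φ).symm (q, g₂)) ((morEquiv φ).symm mg) ↔
      g₂ = g₁⁻¹ * mg.2 ∧ p.IsComposite (gMor φ g₁ q) mg.1 := by
  rw [isComposite_iff, CatMor.isComposite_iff_of_isThin]
  simp only [morEquiv, gMor, Equiv.coe_fn_symm_mk, ← eq_inv_mul_iff_mul_eq]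
  by_cases hg : g₂ = g₁⁻¹ * mg.2
  · subst hg
    simp only [mul_inv_rev, inv_inv, φ.orderIso_map_mul_apply, true_and, and_true]
    exact and_congr φ.orderIso_eq_map_inv_apply_iff (and_congr_left' (φ mg.2⁻¹).injective.eq_iff)
  · simp only [hg, and_false, false_and]

lemma skewMul_apply [Field k] [Fintype G] [Fintype P] [DecidableEq P]
    [DecidableRel ((· ≤ ·) : P → P → Prop)] (a b : SkewAlgebra k P G) (mg : CatMor P × G) :
    skewMul φ a b mg = ∑ p, ∑ q, ∑ g,
      if p.IsComposite (gMor φ g q) mg.1 then a (p, g) * b (q, g⁻¹ * mg.2) else 0 := by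
  simp only [skewMul, CatMor.dite_comp_eq_ite_isComposite]

lemma transToSkew_catMul [Field k] [Fintype G] [DecidableEq G] [Fintype P] [DecidableEq P]
    [DecidableRel ((· ≤ ·) : P → P → Prop)] (a b : CatAlgebra k (Transporter G P φ)) :
    transToSkew φ (catMul a b) = skewMul φ (transToSkew φ a) (transToSkew φ b) := by
  funext mg
  set σ := (morEquiv φ).symm with hσ
  calc catMul a b (σ mg)
      = ∑ pg, ∑ qg, if (σ pg).IsComposite (σ qg) (σ mg) then a (σ pg) * b (σ qg) else 0 := by
        rw [catMul_apply, ← σ.sum_comp]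
        simp_rw [← σ.sum_comp]
    _ = ∑ p, ∑ g₁, ∑ q, ∑ g₂, if g₂ = g₁⁻¹ * mg.2 ∧ p.IsComposite (gMor φ g₁ q) mg.1
          then a (σ (p, g₁)) * b (σ (q, g₂)) else 0 := by
        simp only [Fintype.sum_prod_type, hσ, isComposite_morEquiv_symm_iff]
    _ = ∑ p, ∑ g₁, ∑ q, if p.IsComposite (gMor φ g₁ q) mg.1
          then a (σ (p, g₁)) * b (σ (q, g₁⁻¹ * mg.2)) else 0 := by
        simp only [ite_and, Finset.sum_ite_eq', Finset.mem_univ, if_true]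
    _ = skewMul φ (transToSkew φ a) (transToSkew φ b) mg := by
        rw [skewMul_apply]
        exact Finset.sum_congr rfl fun p _ => Finset.sum_comm

end Transporter

section Skew

variable {k : Type*} [Field k] {G : Type*} [Group G] [Fintype G] [DecidableEq G]
  {P : Type*} [PartialOrder P] [Fintype P] [DecidableEq P]
  [DecidableRel ((· ≤ ·) : P → P → Prop)] (φ : G →* (P ≃o P))

/-- There is a `k`-algebra isomorphism `k(G∝P) ≅ kP[G]` given on basis
elements by `(g, gx ≤ y) ↦ (gx ≤ y) ⊗ g`. -/
theorem Transporter.catAlgebra_iso_skewGroupAlgebra :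
    Function.Bijective (transToSkew (k := k) φ) ∧
    (∀ a b : CatAlgebra k (Transporter G P φ),
      transToSkew φ (a + b) = transToSkew φ a + transToSkew φ b) ∧
    (∀ (r : k) (a : CatAlgebra k (Transporter G P φ)),
      transToSkew φ (r • a) = r • transToSkew φ a) ∧
    (∀ a b : CatAlgebra k (Transporter G P φ),
      transToSkew φ (catMul a b) = skewMul φ (transToSkew φ a) (transToSkew φ b)) ∧
    (transToSkew φ (catOne : CatAlgebra k (Transporter G P φ)) = skewOne) ∧
    (∀ m : CatMor (Transporter G P φ),
      transToSkew φ (catSingle m) =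
        Pi.single ((⟨φ m.2.2.1 m.1, m.2.1, homOfLE m.2.2.2⟩ : CatMor P), m.2.2.1) (1 : k)) := by
  exact ⟨(transToSkewEquiv φ).bijective, map_add (transToSkewEquiv φ),
    map_smul (transToSkewEquiv φ), transToSkew_catMul φ, transToSkew_catOne φ,
    transToSkew_catSingle φ⟩

end Skew
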